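/- Let m ≥ 1 and 0 < ε ≤ 1, and consider the sequential-auction market with items 1,…,m and two additive buyers A and B, where A values every item at m, and B values each item j ≤ m−1 at 1 and values item m at ε. Then the outcome in which items are sold in the order 1,…,m, buyer B wins items 1,…,m−1 and buyer A wins item m, with every price equal to ε, satisfies the SPE characterization condition; its revenue is mε. -/

import Mathlib

open Finset

/-- The set of items that buyer `i` wins among the first `j` items sold, where
`π` is the selling order (`π k` is the `(k+1)`-st item sold) and `win t` is the
buyer who wins item `t`. -/
def soldTo {N : Type*} [DecidableEq N] {m : ℕ} (win : Fin m → N)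
    (π : Equiv.Perm (Fin m)) (i : N) (j : ℕ) : Finset (Fin m) :=
  Finset.univ.filter fun t => ((π.symm t : ℕ) < j ∧ win t = i)

/-- Buyer `i`'s utility at the end of the sequential auction. -/
def util {N : Type*} [DecidableEq N] {m : ℕ} (v : N → Finset (Fin m) → ℝ)
    (win : Fin m → N) (p : Fin m → ℝ) (π : Equiv.Perm (Fin m)) (i : N) : ℝ :=
  v i (soldTo win π i m) - ∑ k ∈ soldTo win π i m, p k

/-- The SPE characterization condition. -/
def SPECond {N : Type*} [DecidableEq N] {m : ℕ} (v : N → Finset (Fin m) → ℝ)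
    (win : Fin m → N) (p : Fin m → ℝ) (π : Equiv.Perm (Fin m)) : Prop :=
  (∀ j, 0 ≤ p j) ∧
  (∀ i, 0 ≤ util v win p π i) ∧
  ∀ (i : N) (k : Fin m),
    v i (insert (π k) (soldTo win π i (k : ℕ))) - p (π k)
        - ∑ t ∈ soldTo win π i (k : ℕ), p t ≤ util v win p π i

/-! For additive buyers, deviating at the `k`-th sale trades the surplus of the items the buyer
wins from then on for the surplus of the `k`-th item alone. In this outcome every winner makes a
nonnegative surplus; B gains nothing from deviating at item `m` (its value equals the price) and
gains `1 - ε` on an earlier item, which it wins anyway; A gains `m - ε` on any item, exactly what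
it gains on item `m`. -/

section Additive

variable {N : Type*} [DecidableEq N] {m : ℕ} {v : N → Finset (Fin m) → ℝ} {w : N → Fin m → ℝ}
  {win : Fin m → N} {p : Fin m → ℝ} {π : Equiv.Perm (Fin m)}

theorem soldTo_subset_soldTo_of_le (i : N) {j j' : ℕ} (h : j ≤ j') :
    soldTo win π i j ⊆ soldTo win π i j' := by
  intro t
  simp only [soldTo, mem_filter, mem_univ, true_and]
  exact fun ⟨hj, hw⟩ => ⟨hj.trans_le h, hw⟩

theorem apply_notMem_soldTo (i : N) (k : Fin m) : π k ∉ soldTo win π i k := by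
  simp [soldTo]

theorem mem_soldTo_sdiff {i : N} {k t : Fin m} :
    t ∈ soldTo win π i m \ soldTo win π i k ↔ win t = i ∧ k ≤ π.symm t := by
  simp only [soldTo, mem_sdiff, mem_filter, mem_univ, true_and, Fin.is_lt, not_and, Fin.le_def]
  constructor
  · exact fun ⟨hw, hk⟩ => ⟨hw, not_lt.1 fun hlt => hk hlt hw⟩
  · exact fun ⟨hw, hk⟩ => ⟨hw, fun hlt => absurd hk (not_le.2 hlt)⟩

theorem util_eq_sum_sub (hv : ∀ i S, v i S = ∑ j ∈ S, w i j) (i : N) :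
    util v win p π i = ∑ t ∈ soldTo win π i m, (w i t - p t) := by
  rw [util, hv, sum_sub_distrib]

theorem deviation_le_util_of_le_sum_sdiff (hv : ∀ i S, v i S = ∑ j ∈ S, w i j) {i : N}
    {k : Fin m}
    (h : w i (π k) - p (π k) ≤ ∑ t ∈ soldTo win π i m \ soldTo win π i k, (w i t - p t)) :
    v i (insert (π k) (soldTo win π i k)) - p (π k) - ∑ t ∈ soldTo win π i k, p t ≤
      util v win p π i := by
  have hsub := soldTo_subset_soldTo_of_le (win := win) (π := π) i k.is_lt.le
  rw [util_eq_sum_sub hv, ← sum_sdiff hsub, hv, sum_insert (apply_notMem_soldTo i k),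
    sum_sub_distrib (s := soldTo win π i k)]
  linarith

theorem SPECond_of_additive (hv : ∀ i S, v i S = ∑ j ∈ S, w i j) (hp : ∀ t, 0 ≤ p t)
    (hs : ∀ t, 0 ≤ w (win t) t - p t)
    (hdev : ∀ i k, w i (π k) - p (π k) ≤ 0 ∨
      ∃ t, win t = i ∧ k ≤ π.symm t ∧ w i (π k) - p (π k) ≤ w i t - p t) :
    SPECond v win p π := by
  have hsum : ∀ i (S : Finset (Fin m)), S ⊆ soldTo win π i m → 0 ≤ ∑ t ∈ S, (w i t - p t) := by
    refine fun i S hS => sum_nonneg fun t ht => ?_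
    obtain ⟨-, rfl⟩ := (mem_filter.1 (hS ht)).2
    exact hs t
  refine ⟨hp, fun i => (util_eq_sum_sub hv i).symm ▸ hsum i _ subset_rfl, fun i k => ?_⟩
  refine deviation_le_util_of_le_sum_sdiff hv ?_
  rcases hdev i k with hneg | ⟨t, hwt, hkt, hle⟩
  · exact hneg.trans (hsum i _ sdiff_subset)
  · refine hle.trans (single_le_sum (f := fun t => w i t - p t) (fun t ht => ?_)
      (mem_soldTo_sdiff.2 ⟨hwt, hkt⟩))
    obtain ⟨rfl, -⟩ := mem_soldTo_sdiff.1 ht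
    exact hs t

end Additive

/-- Items `0, …, m-1` stand for items `1, …, m`, buyer `0` for buyer A and buyer `1` for
buyer B. -/
theorem low_revenue_additive_SPE (m : ℕ) (hm : 1 ≤ m) (ε : ℝ)
    (hε0 : 0 < ε) (hε1 : ε ≤ 1)
    (v : Fin 2 → Finset (Fin m) → ℝ)
    (hv : ∀ i S, v i S =
      ∑ j ∈ S, (if i = 0 then (m : ℝ) else if (j : ℕ) = m - 1 then ε else 1)) :
    SPECond v (fun j => if (j : ℕ) = m - 1 then (0 : Fin 2) else 1)
        (fun _ => ε) (Equiv.refl (Fin m)) ∧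
    (∑ _j : Fin m, ε) = m * ε := by
  have hmε : ε ≤ m := hε1.trans (by exact_mod_cast hm)
  refine ⟨SPECond_of_additive hv (fun _ => hε0.le) (fun t => ?_) (fun i k => ?_), by simp⟩
  · split_ifs <;> simp_all
  · let last : Fin m := ⟨m - 1, by omega⟩
    fin_cases i
    · exact Or.inr ⟨last, by simp [last], Fin.le_def.2 (by simp [last]; omega), by simp⟩
    · by_cases hk : (k : ℕ) = m - 1
      · exact Or.inl (by simp [hk])
      · exact Or.inr ⟨k, by simp [hk], le_rfl, le_rfl⟩
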